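/- Hopf lemma for the Laplacian on a ball: let B ⊂ ℝⁿ be an open ball, u ∈ C²(B) ∩ C(closure B) with Δu ≥ 0 in B, u < m in B, and u(y) = m at a boundary point y ∈ ∂B at which u is differentiable. Then the outward normal derivative of u at y is strictly positive. -/

import Mathlib

/-!
The barrier `w x = exp (-α ‖x - z‖²)` has `Δ w = w (4α² ‖x - z‖² - 2α dim E)`, which is positive on
the annulus `R/2 < ‖x - z‖ < R` once `α` is large. Since `u < m` on the compact inner sphere, a small
`ε > 0` makes `u + ε w ≤ m + ε w y` on both boundary spheres of the annulus, and a strictly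
subharmonic function has no interior maximum, so this bound holds on the whole annulus. Hence `y` is
a maximum of `u + ε w` near `y` in the closed ball, and the derivative of `u + ε w` in the inward
direction `z - y` is `≤ 0`; since `w` strictly decreases in the outward direction, the outward
derivative of `u` is `≥ 2αε w(y) R² > 0`.
-/

open Metric Filter Topology InnerProductSpace
open scoped Laplacian RealInnerProductSpace

/-- The Laplacian of `u` at `x`, as the trace of the second derivative. -/
noncomputable def laplacian (n : ℕ) (u : EuclideanSpace ℝ (Fin n) → ℝ)
    (x : EuclideanSpace ℝ (Fin n)) : ℝ :=
  ∑ i : Fin n, iteratedFDeriv ℝ 2 u x ![EuclideanSpace.single i 1, EuclideanSpace.single i 1]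

theorem IsLocalMax.deriv_deriv_nonpos {g : ℝ → ℝ} {a : ℝ} (h : IsLocalMax g a)
    (hc : ContinuousAt g a) : deriv (deriv g) a ≤ 0 := by
  by_contra! hpos
  -- By the second derivative test `a` would also be a local minimum, so `g` is locally constant.
  have hconst : g =ᶠ[𝓝 a] fun _ => g a := by
    filter_upwards [h, isLocalMin_of_deriv_deriv_pos hpos h.deriv_eq_zero hc] with t h₁ h₂
    exact le_antisymm h₁ h₂
  have hderiv : deriv g =ᶠ[𝓝 a] fun _ => 0 := by
    filter_upwards [hconst.eventuallyEq_nhds] with t ht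
    rw [ht.deriv_eq, deriv_const]
  rw [hderiv.deriv_eq, deriv_const] at hpos
  exact hpos.false

theorem IsCompact.exists_pos_forall_add_le {X : Type*} [TopologicalSpace X] {K : Set X}
    (hK : IsCompact K) {f : X → ℝ} (hf : ContinuousOn f K) {m : ℝ} (h : ∀ x ∈ K, f x < m) :
    ∃ δ > 0, ∀ x ∈ K, f x + δ ≤ m := by
  rcases K.eq_empty_or_nonempty with rfl | hne
  · exact ⟨1, one_pos, by simp⟩
  obtain ⟨x₀, hx₀, hmax⟩ := hK.exists_isMaxOn hne hf
  exact ⟨m - f x₀, sub_pos.2 (h x₀ hx₀), fun x hx => by linarith [isMaxOn_iff.mp hmax x hx]⟩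

theorem mem_sphere_or_mem_sphere_of_mem_annulus {X : Type*} [PseudoMetricSpace X] {z x : X}
    {r R : ℝ} (hx : x ∈ closedBall z R \ ball z r) (hx' : x ∉ ball z R \ closedBall z r) :
    x ∈ sphere z r ∨ x ∈ sphere z R := by
  simp only [Set.mem_sdiff, mem_closedBall, mem_ball, mem_sphere, not_lt, not_and, not_le] at hx hx' ⊢
  rcases hx.1.lt_or_eq with hR | hR
  · exact .inl (le_antisymm (hx' hR) hx.2)
  · exact .inr hR

noncomputable def gaussianBump {E : Type*} [SeminormedAddCommGroup E] (α : ℝ) (z x : E) : ℝ :=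
  Real.exp (-α * ‖x - z‖ ^ 2)

theorem gaussianBump_of_mem_sphere {E : Type*} [SeminormedAddCommGroup E] {α ρ : ℝ} {z x : E}
    (hx : x ∈ sphere z ρ) : gaussianBump α z x = Real.exp (-α * ρ ^ 2) := by
  rw [gaussianBump, ← dist_eq_norm, mem_sphere.mp hx]

section NormedSpace
variable {E F : Type*} [NormedAddCommGroup E] [NormedSpace ℝ E] [NormedAddCommGroup F]
  [NormedSpace ℝ F]

theorem HasFDerivAt.comp_add_smul {f : E → F} {f' : E →L[ℝ] F} {x v : E} {t : ℝ}
    (hf : HasFDerivAt f f' (x + t • v)) : HasDerivAt (fun s : ℝ => f (x + s • v)) (f' v) t :=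
  hf.comp_hasDerivAt t (((hasDerivAt_id t).smul_const v).const_add x |>.congr_deriv (one_smul ℝ v))

theorem iteratedFDeriv_two_apply_eq_deriv_deriv {f : E → F} {x : E} (hf : ContDiffAt ℝ 2 f x)
    (v : E) :
    iteratedFDeriv ℝ 2 f x ![v, v] = deriv (deriv fun t : ℝ => f (x + t • v)) 0 := by
  have hline : Tendsto (fun t : ℝ => x + t • v) (𝓝 0) (𝓝 x) := by
    have : Continuous fun t : ℝ => x + t • v := by fun_prop
    simpa using this.tendsto 0
  have hderiv : deriv (fun t : ℝ => f (x + t • v)) =ᶠ[𝓝 0] fun t => fderiv ℝ f (x + t • v) v := by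
    filter_upwards [hline.eventually (hf.eventually (by simp))] with t ht
    exact (ht.differentiableAt two_ne_zero).hasFDerivAt.comp_add_smul.deriv
  have hD : HasFDerivAt (fderiv ℝ f) (fderiv ℝ (fderiv ℝ f) x) (x + (0 : ℝ) • v) := by
    simpa using ((hf.fderiv_right (m := 1) le_rfl).differentiableAt one_ne_zero).hasFDerivAt
  rw [hderiv.deriv_eq, iteratedFDeriv_two_apply]
  exact ((ContinuousLinearMap.apply ℝ F v).hasFDerivAt.comp_hasDerivAt 0 hD.comp_add_smul).deriv.symm

theorem IsLocalMax.iteratedFDeriv_two_nonpos {f : E → ℝ} {x : E} (h : IsLocalMax f x)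
    (hf : ContDiffAt ℝ 2 f x) (v : E) : iteratedFDeriv ℝ 2 f x ![v, v] ≤ 0 := by
  have hline : ContinuousAt (fun t : ℝ => x + t • v) 0 := by fun_prop
  have hx : x + (0 : ℝ) • v = x := by simp
  have hmax : IsLocalMax (fun t : ℝ => f (x + t • v)) 0 :=
    IsLocalMax.comp_continuous (g := fun t : ℝ => x + t • v) (by rwa [hx]) hline
  rw [iteratedFDeriv_two_apply_eq_deriv_deriv hf]
  exact hmax.deriv_deriv_nonpos (hf.continuousAt.comp_of_eq hline hx)

theorem IsLocalMaxOn.fderiv_sub_nonpos {f : E → ℝ} {s : Set E} {x y : E} (h : IsLocalMaxOn f s x)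
    (hs : Convex ℝ s) (hx : x ∈ s) (hy : y ∈ s) (hf : DifferentiableAt ℝ f x) :
    fderiv ℝ f x (y - x) ≤ 0 :=
  h.hasFDerivWithinAt_nonpos hf.hasFDerivAt.hasFDerivWithinAt
    (sub_mem_posTangentConeAt_of_segment_subset (hs.segment_subset hx hy))

end NormedSpace

section InnerProductSpace
variable {E : Type*} [NormedAddCommGroup E] [InnerProductSpace ℝ E]

section GaussianBump
variable {α : ℝ} {z : E}

theorem contDiff_gaussianBump {n : WithTop ℕ∞} : ContDiff ℝ n (gaussianBump α z) :=
  Real.contDiff_exp.comp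
    (contDiff_const.mul ((contDiff_norm_sq ℝ).comp (contDiff_id.sub contDiff_const)))

theorem hasFDerivAt_gaussianBump (x : E) :
    HasFDerivAt (gaussianBump α z) ((-2 * α * gaussianBump α z x) • innerSL ℝ (x - z)) x := by
  refine (((hasFDerivAt_id x).sub_const z).norm_sq.const_mul (-α)).exp.congr_fderiv ?_
  ext v
  simp only [gaussianBump, id, smul_apply, ContinuousLinearMap.comp_apply,
    innerSL_apply_apply, ContinuousLinearMap.id_apply, smul_eq_mul, nsmul_eq_mul]
  ring

theorem fderiv_gaussianBump_apply (x v : E) :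
    fderiv ℝ (gaussianBump α z) x v = -2 * α * gaussianBump α z x * ⟪x - z, v⟫ := by
  rw [(hasFDerivAt_gaussianBump x).fderiv, smul_apply, innerSL_apply_apply, smul_eq_mul]

theorem hasDerivAt_gaussianBump_line (x v : E) (t : ℝ) :
    HasDerivAt (fun s : ℝ => gaussianBump α z (x + s • v))
      (-2 * α * gaussianBump α z (x + t • v) * ⟪x + t • v - z, v⟫) t :=
  (HasFDerivAt.comp_add_smul (hasFDerivAt_gaussianBump (x + t • v))).congr_deriv
    (by simp only [smul_apply, innerSL_apply_apply, smul_eq_mul])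

theorem iteratedFDeriv_two_gaussianBump (x v : E) :
    iteratedFDeriv ℝ 2 (gaussianBump α z) x ![v, v] =
      gaussianBump α z x * (4 * α ^ 2 * ⟪x - z, v⟫ ^ 2 - 2 * α * ‖v‖ ^ 2) := by
  have hderiv : deriv (fun t : ℝ => gaussianBump α z (x + t • v)) =
      fun t => -2 * α * gaussianBump α z (x + t • v) * ⟪x + t • v - z, v⟫ :=
    funext fun t => (hasDerivAt_gaussianBump_line x v t).deriv
  have hline : HasDerivAt (fun t : ℝ => x + t • v - z) v 0 := by
    simpa using HasFDerivAt.comp_add_smul (x := x) (v := v) (t := 0)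
      ((hasFDerivAt_id _).sub_const z)
  have h := ((hasDerivAt_gaussianBump_line (α := α) (z := z) x v 0).const_mul (-2 * α)).mul
    (hline.inner ℝ (hasDerivAt_const 0 v))
  rw [iteratedFDeriv_two_apply_eq_deriv_deriv contDiff_gaussianBump.contDiffAt, hderiv]
  refine h.deriv.trans ?_
  simp only [zero_smul, add_zero, inner_zero_right, zero_add, real_inner_self_eq_norm_sq]
  ring

theorem laplacian_gaussianBump [FiniteDimensional ℝ E] (x : E) :
    Δ (gaussianBump α z) x =
      gaussianBump α z x * (4 * α ^ 2 * ‖x - z‖ ^ 2 - 2 * α * Module.finrank ℝ E) := by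
  have hsq : ∑ i, ⟪x - z, stdOrthonormalBasis ℝ E i⟫ ^ 2 = ‖x - z‖ ^ 2 := by
    simpa [sq, real_inner_comm, real_inner_self_eq_norm_sq] using
      (stdOrthonormalBasis ℝ E).sum_inner_mul_inner (x - z) (x - z)
  simp only [laplacian_eq_iteratedFDeriv_stdOrthonormalBasis, iteratedFDeriv_two_gaussianBump,
    (stdOrthonormalBasis ℝ E).orthonormal.1 _, ← Finset.mul_sum, Finset.sum_sub_distrib]
  rw [hsq]
  simp

theorem laplacian_gaussianBump_pos [FiniteDimensional ℝ E] {r : ℝ} {x : E} (hr : 0 < r)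
    (hx : r < ‖x - z‖) : 0 < Δ (gaussianBump ((Module.finrank ℝ E + 1) / r ^ 2) z) x := by
  set α : ℝ := (Module.finrank ℝ E + 1) / r ^ 2
  have hα : 0 < α := by positivity
  have hαr : α * r ^ 2 = Module.finrank ℝ E + 1 := div_mul_cancel₀ _ (pow_pos hr 2).ne'
  have hαx := mul_lt_mul_of_pos_left (pow_lt_pow_left₀ hx hr.le two_ne_zero) hα
  rw [laplacian_gaussianBump]
  exact mul_pos (Real.exp_pos _) (by nlinarith [(Module.finrank ℝ E).cast_nonneg (α := ℝ)])

end GaussianBump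

variable [FiniteDimensional ℝ E]

theorem IsLocalMax.laplacian_nonpos {f : E → ℝ} {x : E} (h : IsLocalMax f x)
    (hf : ContDiffAt ℝ 2 f x) : Δ f x ≤ 0 := by
  rw [laplacian_eq_iteratedFDeriv_stdOrthonormalBasis]
  exact Finset.sum_nonpos fun i _ => h.iteratedFDeriv_two_nonpos hf _

theorem IsCompact.forall_le_of_laplacian_pos {v : E → ℝ} {K U : Set E} {M : ℝ}
    (hK : IsCompact K) (hv : ContinuousOn v K) (hU : IsOpen U) (hUK : U ⊆ K)
    (hv₂ : ∀ x ∈ U, ContDiffAt ℝ 2 v x) (hΔ : ∀ x ∈ U, 0 < Δ v x)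
    (hbdry : ∀ x ∈ K \ U, v x ≤ M) : ∀ x ∈ K, v x ≤ M := by
  intro x hx
  obtain ⟨x₀, hx₀, hmax⟩ := hK.exists_isMaxOn ⟨x, hx⟩ hv
  refine (hmax hx).trans ?_
  by_cases hx₀U : x₀ ∈ U
  · have hloc := hmax.isLocalMax (Filter.mem_of_superset (hU.mem_nhds hx₀U) hUK)
    exact absurd (hloc.laplacian_nonpos (hv₂ x₀ hx₀U)) (hΔ x₀ hx₀U).not_ge
  · exact hbdry x₀ ⟨hx₀, hx₀U⟩

theorem exists_gaussianBump_comparison {u : E → ℝ} {z : E} {R m : ℝ} (hR : 0 < R)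
    (hC2 : ContDiffOn ℝ 2 u (ball z R)) (hcont : ContinuousOn u (closedBall z R))
    (hsub : ∀ x ∈ ball z R, 0 ≤ Δ u x) (hlt : ∀ x ∈ ball z R, u x < m) :
    ∃ α > 0, ∃ ε > 0, ∀ x ∈ closedBall z R \ ball z (R / 2),
      (u + ε • gaussianBump α z) x ≤ m + ε * Real.exp (-α * R ^ 2) := by
  set r := R / 2
  have hr : 0 < r := half_pos hR
  have hrR : r < R := half_lt_self hR
  have hu_le : ∀ x ∈ closedBall z R, u x ≤ m := by
    rw [← closure_ball z hR.ne'] at hcont ⊢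
    exact le_on_closure (fun x hx => (hlt x hx).le) hcont continuousOn_const
  obtain ⟨δ, hδ, hu_inner⟩ := (isCompact_sphere z r).exists_pos_forall_add_le
    (hcont.mono (sphere_subset_closedBall.trans (closedBall_subset_closedBall hrR.le)))
    (fun x hx => hlt x (sphere_subset_ball hrR hx))
  set α : ℝ := (Module.finrank ℝ E + 1) / r ^ 2
  set ε := δ / Real.exp (-α * r ^ 2)
  have hε : 0 < ε := by positivity
  refine ⟨α, by positivity, ε, hε,
    ((isCompact_closedBall z R).diff isOpen_ball).forall_le_of_laplacian_pos
      (U := ball z R \ closedBall z r) ?_ (isOpen_ball.sdiff isClosed_closedBall) ?_ ?_ ?_ ?_⟩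
  · exact (hcont.mono Set.sdiff_subset).add
      ((contDiff_gaussianBump (n := 0)).continuous.const_smul ε).continuousOn
  · exact fun x hx => ⟨ball_subset_closedBall hx.1, fun h => hx.2 (ball_subset_closedBall h)⟩
  · exact fun x hx => (hC2.contDiffAt (isOpen_ball.mem_nhds hx.1)).add
      (contDiff_gaussianBump.const_smul ε).contDiffAt
  · rintro x ⟨hxR, hxr⟩
    have hg : ContDiffAt ℝ 2 (gaussianBump α z) x := contDiff_gaussianBump.contDiffAt
    rw [(hC2.contDiffAt (isOpen_ball.mem_nhds hxR)).laplacian_add (f₂ := ε • gaussianBump α z)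
      (hg.const_smul ε), laplacian_smul ε hg]
    have hΔg := laplacian_gaussianBump_pos (z := z) hr (by simpa [dist_eq_norm] using hxr)
    exact add_pos_of_nonneg_of_pos (hsub x hxR) (smul_pos hε hΔg)
  · rintro x ⟨hxK, hxU⟩
    simp only [Pi.add_apply, Pi.smul_apply, smul_eq_mul]
    rcases mem_sphere_or_mem_sphere_of_mem_annulus hxK hxU with hx | hx
    · rw [gaussianBump_of_mem_sphere hx, div_mul_cancel₀ _ (Real.exp_pos _).ne']
      linarith [hu_inner x hx, mul_pos hε (Real.exp_pos (-α * R ^ 2))]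
    · rw [gaussianBump_of_mem_sphere hx]
      linarith [hu_le x hxK.1]

theorem hopf_lemma_ball {u : E → ℝ} {z y : E} {R m : ℝ} (hR : 0 < R)
    (hC2 : ContDiffOn ℝ 2 u (ball z R)) (hcont : ContinuousOn u (closedBall z R))
    (hsub : ∀ x ∈ ball z R, 0 ≤ Δ u x) (hlt : ∀ x ∈ ball z R, u x < m)
    (hy : y ∈ sphere z R) (huy : u y = m) (hdiff : DifferentiableAt ℝ u y) :
    0 < fderiv ℝ u y (y - z) := by
  obtain ⟨α, hα, ε, hε, hcmp⟩ := exists_gaussianBump_comparison hR hC2 hcont hsub hlt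
  have hvy : (u + ε • gaussianBump α z) y = m + ε * Real.exp (-α * R ^ 2) := by
    simp only [Pi.add_apply, Pi.smul_apply, smul_eq_mul, huy, gaussianBump_of_mem_sphere hy]
  have hmax : IsLocalMaxOn (u + ε • gaussianBump α z) (closedBall z R) y := by
    have hy' : (closedBall z (R / 2))ᶜ ∈ 𝓝 y := isClosed_closedBall.isOpen_compl.mem_nhds (by
      simp only [Set.mem_compl_iff, mem_closedBall, not_le, mem_sphere.mp hy]
      exact half_lt_self hR)
    filter_upwards [inter_mem_nhdsWithin _ hy'] with p ⟨hpR, hpr⟩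
    exact hvy ▸ hcmp p ⟨hpR, fun h => hpr (ball_subset_closedBall h)⟩
  have hg : DifferentiableAt ℝ (gaussianBump α z) y :=
    (contDiff_gaussianBump (n := 1)).differentiable one_ne_zero y
  have hv := hmax.fderiv_sub_nonpos (convex_closedBall z R) (sphere_subset_closedBall hy)
    (mem_closedBall_self hR.le) (hdiff.add (hg.const_smul ε))
  have hR2 : ⟪y - z, y - z⟫ = R ^ 2 := by
    rw [real_inner_self_eq_norm_sq, ← dist_eq_norm, mem_sphere.mp hy]
  rw [fderiv_add hdiff (hg.const_smul ε), fderiv_const_smul hg, ← neg_sub y z, map_neg,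
    neg_nonpos, add_apply, smul_apply, fderiv_gaussianBump_apply, hR2, smul_eq_mul] at hv
  have hpos : 0 < ε * (2 * α * gaussianBump α z y * R ^ 2) :=
    mul_pos hε (mul_pos (mul_pos (by positivity) (Real.exp_pos _)) (by positivity))
  linarith

end InnerProductSpace

theorem laplacian_eq_laplacian (n : ℕ) (u : EuclideanSpace ℝ (Fin n) → ℝ) :
    laplacian n u = Δ u := by
  rw [laplacian_eq_iteratedFDeriv_orthonormalBasis u (EuclideanSpace.basisFun (Fin n) ℝ)]
  ext x
  simp [laplacian]

/-- Hopf lemma for the Laplacian on a ball. -/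
theorem hopf_lemma_laplacian (n : ℕ) (z : EuclideanSpace ℝ (Fin n)) (R : ℝ) (hR : 0 < R)
    (u : EuclideanSpace ℝ (Fin n) → ℝ) (m : ℝ)
    (hC2 : ContDiffOn ℝ 2 u (ball z R))
    (hcont : ContinuousOn u (closedBall z R))
    (hsub : ∀ x ∈ ball z R, 0 ≤ laplacian n u x)
    (hlt : ∀ x ∈ ball z R, u x < m)
    (y : EuclideanSpace ℝ (Fin n)) (hy : y ∈ sphere z R) (huy : u y = m)
    (hdiff : DifferentiableAt ℝ u y) :
    0 < ⟪gradient u y, R⁻¹ • (y - z)⟫ := by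
  rw [laplacian_eq_laplacian] at hsub
  rw [real_inner_smul_right, gradient, toDual_symm_apply]
  exact mul_pos (inv_pos.2 hR) (hopf_lemma_ball hR hC2 hcont hsub hlt hy huy hdiff)
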